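/- If h:[0,1]→ℝ is continuous on [0,1], then Th is continuous on [0,1]. -/
import Mathlib


/-- The binary entropy function with base-2 logarithms (equals 0 at 0 and 1). -/
noncomputable def binH (q : ℝ) : ℝ := -q * Real.logb 2 q - (1 - q) * Real.logb 2 (1 - q)

/-- The expression maximized in the dynamic programming operator. -/
noncomputable def Treward (h : ℝ → ℝ) (δ γ : ℝ) : ℝ :=
  binH ((1 + δ - γ) / 2) + δ + γ - 1
    + ((1 + δ - γ) / 2) * h (2 * δ / (1 + δ - γ))
    + ((1 - δ + γ) / 2) * h (1 - 2 * γ / (1 - δ + γ))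

/-- The dynamic programming operator `T`. -/
noncomputable def Tdp (h : ℝ → ℝ) (z : ℝ) : ℝ :=
  sSup ((fun p : ℝ × ℝ => Treward h p.1 p.2) '' (Set.Icc 0 z ×ˢ Set.Icc 0 (1 - z)))

/-! ### Auxiliary lemmas -/

lemma binH_eq (q : ℝ) :
    binH q = (-(q * Real.log q) - ((1 - q) * Real.log (1 - q))) / Real.log 2 := by
  unfold binH Real.logb; ring

lemma continuous_binH : Continuous binH := by
  have h1 : Continuous fun q : ℝ => q * Real.log q := Real.continuous_mul_log
  have h2 : Continuous fun q : ℝ => (1 - q) * Real.log (1 - q) :=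
    h1.comp (continuous_const.sub continuous_id)
  have h3 : Continuous fun q : ℝ =>
      (-(q * Real.log q) - ((1 - q) * Real.log (1 - q))) / Real.log 2 :=
    (h1.neg.sub h2).div_const _
  have : binH = fun q : ℝ =>
      (-(q * Real.log q) - ((1 - q) * Real.log (1 - q))) / Real.log 2 := funext binH_eq
  rw [this]; exact h3

/-- The compact triangle containing all the rectangles. -/
def Kset : Set (ℝ × ℝ) := {p | 0 ≤ p.1 ∧ 0 ≤ p.2 ∧ p.1 + p.2 ≤ 1}

lemma isCompact_Kset : IsCompact Kset := by
  have hclosed : IsClosed Kset := by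
    have h1 : IsClosed {p : ℝ × ℝ | 0 ≤ p.1} := isClosed_le continuous_const continuous_fst
    have h2 : IsClosed {p : ℝ × ℝ | 0 ≤ p.2} := isClosed_le continuous_const continuous_snd
    have h3 : IsClosed {p : ℝ × ℝ | p.1 + p.2 ≤ 1} :=
      isClosed_le (continuous_fst.add continuous_snd) continuous_const
    exact (h1.inter (h2.inter h3))
  have hsub : Kset ⊆ Set.Icc ((0 : ℝ), (0 : ℝ)) (1, 1) := by
    rintro ⟨x, y⟩ ⟨hx, hy, hxy⟩
    constructor
    · exact ⟨hx, hy⟩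
    · exact ⟨by dsimp at *; linarith, by dsimp at *; linarith⟩
  exact isCompact_Icc.of_isClosed_subset hclosed hsub

lemma aux_mem (x y : ℝ) (hx : 0 ≤ x) (hy : 0 ≤ y) (hxy : x + y ≤ 1) :
    2 * x / (1 + x - y) ∈ Set.Icc (0 : ℝ) 1 := by
  have hd : 0 ≤ 1 + x - y := by linarith
  rcases eq_or_lt_of_le hd with hd0 | hdpos
  · have hx0 : x = 0 := by linarith
    simp [hx0]
  · constructor
    · positivity
    · rw [div_le_one hdpos]; linarith

/-- Key lemma: continuity on `Kset` of products `u p * h (a p)` where `u`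
may vanish on `Kset` (but then the product degenerates). -/
lemma key_cont (h : ℝ → ℝ) (hc : ContinuousOn h (Set.Icc (0 : ℝ) 1)) (M : ℝ)
    (hM : ∀ x ∈ Set.Icc (0 : ℝ) 1, ‖h x‖ ≤ M)
    (u a : ℝ × ℝ → ℝ) (hu : Continuous u)
    (hupos : ∀ p ∈ Kset, 0 ≤ u p)
    (ha : ∀ p ∈ Kset, a p ∈ Set.Icc (0 : ℝ) 1)
    (hacont : ∀ p ∈ Kset, u p ≠ 0 → ContinuousWithinAt a Kset p) :
    ContinuousOn (fun p => u p * h (a p)) Kset := by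
  intro p hp
  by_cases hz : u p = 0
  · rw [ContinuousWithinAt]
    have h0 : u p * h (a p) = 0 := by rw [hz]; ring
    rw [h0]
    apply squeeze_zero_norm' (a := fun q => u q * M)
    · filter_upwards [self_mem_nhdsWithin] with q hq
      have hb := hM (a q) (ha q hq)
      have hun := hupos q hq
      rw [Real.norm_eq_abs, abs_mul, abs_of_nonneg hun]
      calc u q * |h (a q)| ≤ u q * M := by
            apply mul_le_mul_of_nonneg_left _ hun
            simpa [Real.norm_eq_abs] using hb
        _ = u q * M := rfl
    · have h1 : Filter.Tendsto (fun q => u q * M) (nhds p) (nhds (u p * M)) :=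
        (hu.mul continuous_const).tendsto p
      have h2 : Filter.Tendsto (fun q => u q * M) (nhdsWithin p Kset) (nhds (u p * M)) :=
        h1.mono_left nhdsWithin_le_nhds
      simpa [hz] using h2
  · have h1 : ContinuousWithinAt (fun q => h (a q)) Kset p := by
      have := (hc (a p) (ha p hp)).comp (hacont p hp hz) (fun q hq => ha q hq)
      exact this
    exact (hu.continuousWithinAt).mul h1

lemma contF (h : ℝ → ℝ) (hc : ContinuousOn h (Set.Icc (0 : ℝ) 1)) :
    ContinuousOn (fun p : ℝ × ℝ => Treward h p.1 p.2) Kset := by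
  obtain ⟨M, hM⟩ := isCompact_Icc.exists_bound_of_continuousOn hc
  have hbase : ContinuousOn
      (fun p : ℝ × ℝ => binH ((1 + p.1 - p.2) / 2) + p.1 + p.2 - 1) Kset := by
    apply Continuous.continuousOn
    have : Continuous fun p : ℝ × ℝ => (1 + p.1 - p.2) / 2 :=
      ((continuous_const.add continuous_fst).sub continuous_snd).div_const 2
    exact (((continuous_binH.comp this).add continuous_fst).add continuous_snd).sub
      continuous_const
  have hg1 : ContinuousOn
      (fun p : ℝ × ℝ => ((1 + p.1 - p.2) / 2) * h (2 * p.1 / (1 + p.1 - p.2))) Kset := by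
    apply key_cont h hc M hM
    · exact ((continuous_const.add continuous_fst).sub continuous_snd).div_const 2
    · rintro ⟨x, y⟩ ⟨hx, hy, hxy⟩; dsimp at *; linarith
    · rintro ⟨x, y⟩ ⟨hx, hy, hxy⟩; exact aux_mem x y hx hy hxy
    · rintro ⟨x, y⟩ ⟨hx, hy, hxy⟩ hne
      apply ContinuousAt.continuousWithinAt
      apply ContinuousAt.div
      · exact (continuous_const.mul continuous_fst).continuousAt
      · exact ((continuous_const.add continuous_fst).sub continuous_snd).continuousAt
      · dsimp at *; intro hcon; apply hne; rw [hcon]; norm_num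
  have hg2 : ContinuousOn
      (fun p : ℝ × ℝ => ((1 - p.1 + p.2) / 2) * h (1 - 2 * p.2 / (1 - p.1 + p.2))) Kset := by
    apply key_cont h hc M hM
    · exact ((continuous_const.sub continuous_fst).add continuous_snd).div_const 2
    · rintro ⟨x, y⟩ ⟨hx, hy, hxy⟩; dsimp at *; linarith
    · rintro ⟨x, y⟩ ⟨hx, hy, hxy⟩
      have hmem := aux_mem y x hy hx (by linarith)
      have h1 := hmem.1
      have h2 := hmem.2
      have heq : 2 * y / (1 + y - x) = 2 * y / (1 - x + y) := by ring_nf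
      rw [heq] at h1 h2
      exact ⟨by dsimp; linarith, by dsimp; linarith⟩
    · rintro ⟨x, y⟩ ⟨hx, hy, hxy⟩ hne
      apply ContinuousAt.continuousWithinAt
      apply ContinuousAt.sub continuousAt_const
      apply ContinuousAt.div
      · exact (continuous_const.mul continuous_snd).continuousAt
      · exact ((continuous_const.sub continuous_fst).add continuous_snd).continuousAt
      · dsimp at *; intro hcon; apply hne; rw [hcon]; norm_num
  have : (fun p : ℝ × ℝ => Treward h p.1 p.2) =
      fun p : ℝ × ℝ => (binH ((1 + p.1 - p.2) / 2) + p.1 + p.2 - 1)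
        + ((1 + p.1 - p.2) / 2) * h (2 * p.1 / (1 + p.1 - p.2))
        + ((1 - p.1 + p.2) / 2) * h (1 - 2 * p.2 / (1 - p.1 + p.2)) := by
    funext p; unfold Treward; ring
  rw [this]
  exact (hbase.add hg1).add hg2

lemma rect_subset (z : ℝ) (hz : z ∈ Set.Icc (0 : ℝ) 1) :
    (Set.Icc 0 z ×ˢ Set.Icc 0 (1 - z) : Set (ℝ × ℝ)) ⊆ Kset := by
  rintro ⟨x, y⟩ ⟨⟨hx0, hxz⟩, ⟨hy0, hyz⟩⟩
  exact ⟨hx0, hy0, by dsimp at *; linarith⟩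

/-- The operator `T` retains continuity: if `h` is continuous on `[0,1]`,
then so is `T h`. -/
theorem Tdp_continuousOn (h : ℝ → ℝ) (hc : ContinuousOn h (Set.Icc (0 : ℝ) 1)) :
    ContinuousOn (Tdp h) (Set.Icc (0 : ℝ) 1) := by
  set F : ℝ × ℝ → ℝ := fun p => Treward h p.1 p.2 with hF
  have hFc : ContinuousOn F Kset := contF h hc
  have hUC : UniformContinuousOn F Kset :=
    isCompact_Kset.uniformContinuousOn_of_continuous hFc
  -- basic facts about the rectangles
  have hne : ∀ z ∈ Set.Icc (0 : ℝ) 1,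
      ((0 : ℝ), (0 : ℝ)) ∈ (Set.Icc 0 z ×ˢ Set.Icc 0 (1 - z) : Set (ℝ × ℝ)) := by
    rintro z ⟨hz0, hz1⟩
    exact ⟨⟨le_refl 0, hz0⟩, ⟨le_refl 0, by show (0:ℝ) ≤ 1 - z; linarith⟩⟩
  have hbdd : ∀ z ∈ Set.Icc (0 : ℝ) 1,
      BddAbove (F '' (Set.Icc 0 z ×ˢ Set.Icc 0 (1 - z))) := by
    intro z hz
    have hcpt : IsCompact (Set.Icc (0:ℝ) z ×ˢ Set.Icc (0:ℝ) (1 - z)) :=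
      isCompact_Icc.prod isCompact_Icc
    exact (hcpt.image_of_continuousOn (hFc.mono (rect_subset z hz))).bddAbove
  -- main estimate
  have hmain : ∀ ε > 0, ∃ δ > 0, ∀ z ∈ Set.Icc (0 : ℝ) 1, ∀ z' ∈ Set.Icc (0 : ℝ) 1,
      |z - z'| < δ → Tdp h z ≤ Tdp h z' + ε := by
    intro ε hε
    obtain ⟨δ, hδ, hmod⟩ := Metric.uniformContinuousOn_iff.mp hUC ε hε
    refine ⟨δ, hδ, ?_⟩
    intro z hz z' hz' hzz
    rw [Tdp, Tdp]
    apply csSup_le (Set.Nonempty.image _ ⟨_, hne z hz⟩)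
    rintro w ⟨p, hp, rfl⟩
    set q : ℝ × ℝ := (min p.1 z', min p.2 (1 - z')) with hq
    have hp1 := hp.1
    have hp2 := hp.2
    have hqmem : q ∈ (Set.Icc 0 z' ×ˢ Set.Icc 0 (1 - z') : Set (ℝ × ℝ)) := by
      constructor
      · exact ⟨le_min hp1.1 hz'.1, min_le_right _ _⟩
      · exact ⟨le_min hp2.1 (by have h2 := hz'.2; show (0:ℝ) ≤ 1 - z'; linarith), min_le_right _ _⟩
    have hdist : dist p q < δ := by
      rw [Prod.dist_eq]
      apply max_lt
      · rw [Real.dist_eq]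
        rcases le_or_gt p.1 z' with hle | hlt
        · simp [hq, min_eq_left hle, hδ]
        · rw [hq]; dsimp
          rw [min_eq_right hlt.le, abs_of_nonneg (by linarith)]
          have h1 : p.1 ≤ z := hp1.2
          calc p.1 - z' ≤ z - z' := by linarith
            _ ≤ |z - z'| := le_abs_self _
            _ < δ := hzz
      · rw [Real.dist_eq]
        rcases le_or_gt p.2 (1 - z') with hle | hlt
        · simp [hq, min_eq_left hle, hδ]
        · rw [hq]; dsimp
          rw [min_eq_right hlt.le, abs_of_nonneg (by linarith)]
          have h2 : p.2 ≤ 1 - z := hp2.2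
          calc p.2 - (1 - z') ≤ (1 - z) - (1 - z') := by linarith
            _ = z' - z := by ring
            _ ≤ |z - z'| := by rw [abs_sub_comm]; exact le_abs_self _
            _ < δ := hzz
    have hpK : p ∈ Kset := rect_subset z hz hp
    have hqK : q ∈ Kset := rect_subset z' hz' hqmem
    have hFd := hmod p hpK q hqK hdist
    rw [Real.dist_eq] at hFd
    have h1 : F p - F q < ε := lt_of_le_of_lt (le_abs_self _) hFd
    have h2 : F q ≤ sSup (F '' (Set.Icc 0 z' ×ˢ Set.Icc 0 (1 - z'))) :=
      le_csSup (hbdd z' hz') ⟨q, hqmem, rfl⟩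
    linarith
  -- conclude continuity
  intro z hz
  rw [Metric.continuousWithinAt_iff]
  intro ε hε
  obtain ⟨δ, hδ, hest⟩ := hmain (ε / 2) (by linarith)
  refine ⟨δ, hδ, ?_⟩
  intro x hx hdx
  rw [Real.dist_eq] at hdx ⊢
  have h1 := hest x hx z hz (by rw [abs_sub_comm] at hdx ⊢; exact hdx)
  have h2 := hest z hz x hx (by rw [abs_sub_comm] at hdx; exact hdx)
  rw [abs_sub_lt_iff]
  constructor <;> linarith
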